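/- For every sequential reserve system, there exists an eligibility-compliant matching that simultaneously has maximum cardinality and is a maximum beneficiary assignment. -/

import Mathlib

open Finset

variable {I C : Type*}

/-- Agent `i` is eligible for category `c` when `i ≻_c ∅`. -/
def Eligible (prio : C → Option I → Option I → Prop) (i : I) (c : C) : Prop :=
  prio c (some i) none

/-- `μ` is a matching: the set of agents assigned to each category `c`
has at most `q c` elements. -/
def IsMatching [Fintype I] [DecidableEq C] (q : C → ℕ) (μ : I → Option C) : Prop :=
  ∀ c : C, (Finset.univ.filter (fun i => μ i = some c)).card ≤ q c

/-- `μ` is eligibility-compliant: assigned agents are eligible. -/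
def Compliant (prio : C → Option I → Option I → Prop) (μ : I → Option C) : Prop :=
  ∀ (i : I) (c : C), μ i = some c → Eligible prio i c

/-- The number of agents matched under `μ`. -/
def matchedCount [Fintype I] (μ : I → Option C) : ℕ :=
  (Finset.univ.filter (fun i => (μ i).isSome)).card

/-- `μ` has maximum cardinality among eligibility-compliant matchings. -/
def MaxCard [Fintype I] [DecidableEq C] (q : C → ℕ)
    (prio : C → Option I → Option I → Prop) (μ : I → Option C) : Prop :=
  ∀ μ' : I → Option C, IsMatching q μ' → Compliant prio μ' →
    matchedCount μ' ≤ matchedCount μ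

/-- Non-wastefulness: an eligible unmatched agent implies the category is full. -/
def NonWasteful [Fintype I] [DecidableEq C] (q : C → ℕ)
    (prio : C → Option I → Option I → Prop) (μ : I → Option C) : Prop :=
  ∀ (i : I) (c : C), Eligible prio i c → μ i = none →
    (Finset.univ.filter (fun j => μ j = some c)).card = q c

/-- Respect for priorities: a matched agent has higher priority (at its
category) than every unmatched agent. -/
def RespectsPriorities (prio : C → Option I → Option I → Prop)
    (μ : I → Option C) : Prop :=
  ∀ (i i' : I) (c : C), μ i = some c → μ i' = none → prio c (some i) (some i')

/-- `μ'` is obtained from `μ` by a swap step at category `c`: an unmatched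
agent `i`, eligible for `c`, replaces the `≻_c`-least agent `i'` currently
assigned to `c`, where `i ≻_c i'`. -/
def SwapStep (prio : C → Option I → Option I → Prop) (c : C)
    (μ μ' : I → Option C) : Prop :=
  ∃ i i' : I,
    μ i = none ∧ Eligible prio i c ∧
    μ i' = some c ∧
    (∀ j : I, μ j = some c → j ≠ i' → prio c (some j) (some i')) ∧
    prio c (some i) (some i') ∧
    μ' i = some c ∧ μ' i' = none ∧
    (∀ j : I, j ≠ i → j ≠ i' → μ' j = μ j)

/-- One swap step between eligibility-compliant matchings. -/
def SwapRel [Fintype I] [DecidableEq C] (q : C → ℕ)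
    (prio : C → Option I → Option I → Prop) (μ μ' : I → Option C) : Prop :=
  IsMatching q μ ∧ Compliant prio μ ∧ IsMatching q μ' ∧ Compliant prio μ' ∧
    ∃ c : C, SwapStep prio c μ μ'

/-- `μ` is terminal: no swap step applies to `μ`. -/
def Terminal (prio : C → Option I → Option I → Prop) (μ : I → Option C) : Prop :=
  ¬ ∃ (i i' : I) (c : C),
      μ i = none ∧ Eligible prio i c ∧ μ i' = some c ∧
      (∀ j : I, μ j = some c → j ≠ i' → prio c (some j) (some i')) ∧
      prio c (some i) (some i')

/-- The strict part `▷` of the precedence preorder, extended to `C ∪ {∅}`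
by `c ▷ ∅` for every category `c`. -/
def StrictPrec (prec : C → C → Prop) : Option C → Option C → Prop
  | some c, some c' => prec c c' ∧ ¬ prec c' c
  | some _, none => True
  | none, _ => False

/-- The number of agents assigned to preferential treatment categories. -/
def benefCount [Fintype I] [DecidableEq C] (Cstar : Finset C)
    (μ : I → Option C) : ℕ :=
  ∑ c ∈ Cstar, (Finset.univ.filter (fun i => μ i = some c)).card

/-- `μ` is a maximum beneficiary assignment. -/
def MaxBenef [Fintype I] [DecidableEq C] (q : C → ℕ)
    (prio : C → Option I → Option I → Prop) (Cstar : Finset C)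
    (μ : I → Option C) : Prop :=
  ∀ μ' : I → Option C, IsMatching q μ' → Compliant prio μ' →
    benefCount Cstar μ' ≤ benefCount Cstar μ

/-- Order preservation by swapping. -/
def OrderPresSwap (prio : C → Option I → Option I → Prop) (prec : C → C → Prop)
    (μ : I → Option C) : Prop :=
  ¬ ∃ (i j : I) (ci cj : C),
      μ i = some ci ∧ μ j = some cj ∧
      StrictPrec prec (some cj) (some ci) ∧
      prio cj (some i) (some j) ∧
      Eligible prio j ci ∧ Eligible prio i cj

/-- Respect for precedence over categories. -/
def RespectsPrec [Fintype I] [DecidableEq C] (q : C → ℕ)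
    (prio : C → Option I → Option I → Prop) (Cstar : Finset C)
    (prec : C → C → Prop) (μ : I → Option C) : Prop :=
  ¬ ∃ (i j : I) (cj : C),
      μ j = some cj ∧
      StrictPrec prec (some cj) (μ i) ∧
      prio cj (some i) (some j) ∧
      ∃ μ' : I → Option C,
        IsMatching q μ' ∧ Compliant prio μ' ∧
        (∀ (k : I) (ck : C), μ k = some ck →
          StrictPrec prec (some ck) (some cj) → μ' k = μ k) ∧
        (∀ ℓ : I, μ ℓ = some cj → prio cj (some ℓ) (some i) → μ' ℓ = μ ℓ) ∧
        μ' i = some cj ∧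
        MaxCard q prio μ' ∧ MaxBenef q prio Cstar μ'

/-- Order preservation for a hybrid sequential reserve system with open
categories `c01` (processed first) and `c02` (processed last). -/
def OrderPresHybrid (prio : C → Option I → Option I → Prop) (Cstar : Finset C)
    (c01 c02 : C) (μ : I → Option C) : Prop :=
  ∀ (i j : I) (cj : C), μ j = some cj → prio cj (some i) (some j) →
    ((∀ ci : C, μ i = some ci → (ci ∈ Cstar ∨ ci = c02) →
        Eligible prio j ci → cj ≠ c01) ∧
     ((cj ∈ Cstar ∨ cj = c01) → Eligible prio i cj → μ i ≠ some c02))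

/-- `P'` is an `i`-improvement of `P`: the orders agree off `i`, and `i`'s
priority weakly increases in every category. -/
def Improves (i : I) (P P' : C → Option I → Option I → Prop) : Prop :=
  ∀ c : C,
    (∀ x y : Option I, x ≠ some i → y ≠ some i → (P' c x y ↔ P c x y)) ∧
    (∀ x : Option I, x ≠ some i → P c (some i) x → P' c (some i) x)

/-!
Among the maximum beneficiary assignments take one, `μ`, matching as many agents as possible.
If a compliant matching `ν` matched more agents, some agent `i` would be matched by `ν` to a
category `c` but unmatched by `μ`. If `c` has a free seat under `μ`, seat `i` there. Otherwise
some agent `j` holds a seat at `c` under `μ` but not under `ν`; handing `j`'s seat to `i`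
keeps the number of agents in every category and brings `μ` closer to `ν`, so iterating ends
with a free seat. Either way `μ` gains an agent without losing beneficiaries, contradicting
its choice.
-/

open Function

lemma exists_forall_le_of_bddAbove_image {α β : Type*} [LinearOrder β] [SuccOrder β]
    [IsSuccArchimedean β] {s : Set α} {f : α → β} (hs : s.Nonempty) (hf : BddAbove (f '' s)) :
    ∃ a ∈ s, ∀ b ∈ s, f b ≤ f a := by
  obtain ⟨_, ⟨a, ha, rfl⟩, hmax⟩ := hf.exists_isGreatest_of_nonempty (hs.image f)
  exact ⟨a, ha, fun b hb => hmax (Set.mem_image_of_mem f hb)⟩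

lemma card_filter_comp_perm {α : Type*} [Fintype α] (σ : Equiv.Perm α) (p : α → Prop)
    [DecidablePred p] : #(univ.filter fun a => p (σ a)) = #(univ.filter p) := by
  rw [← map_univ_equiv σ.symm, filter_map, card_map]
  congr 1
  ext a
  simp

lemma card_filter_comp_swap_ne_lt {α β : Type*} [Fintype α] [DecidableEq α] [DecidableEq β]
    {f g : α → β} {i j : α} (hij : f j = g i) (hi : f i ≠ g i) (hj : f j ≠ g j) :
    #(univ.filter fun k => f (Equiv.swap i j k) ≠ g k) < #(univ.filter fun k => f k ≠ g k) := by
  refine card_lt_card ((ssubset_iff_of_subset fun k hk => ?_).2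
    ⟨i, by simpa using hi, by simp [hij]⟩)
  simp only [mem_filter, mem_univ, true_and] at hk ⊢
  rcases eq_or_ne k i with rfl | hki
  · simp [hij] at hk
  rcases eq_or_ne k j with rfl | hkj
  · exact hj
  · rwa [Equiv.swap_apply_of_ne_of_ne hki hkj] at hk

section ReserveSystem

variable {q : C → ℕ} {prio : C → Option I → Option I → Prop} {Cstar : Finset C}
  {μ ν : I → Option C} {i j : I} {c : C}

lemma Compliant.comp_swap [DecidableEq I] (hμ : Compliant prio μ) (hi : μ i = none)
    (hj : μ j = some c) (hel : Eligible prio i c) : Compliant prio (μ ∘ Equiv.swap i j) := by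
  intro k d hk
  simp only [comp_apply, Equiv.swap_apply_def] at hk
  split_ifs at hk with hki hkj
  · obtain rfl : c = d := Option.some_injective _ (hj.symm.trans hk)
    exact hki ▸ hel
  · simp [hi] at hk
  · exact hμ k d hk

lemma Compliant.update [DecidableEq I] (hμ : Compliant prio μ) (hel : Eligible prio i c) :
    Compliant prio (update μ i (some c)) := by
  intro k d hk
  rcases eq_or_ne k i with rfl | hki
  · obtain rfl : c = d := by simpa using hk
    exact hel
  · exact hμ k d (by rwa [update_of_ne hki] at hk)

variable [Fintype I]

lemma matchedCount_comp_perm (μ : I → Option C) (σ : Equiv.Perm I) :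
    matchedCount (μ ∘ σ) = matchedCount μ :=
  card_filter_comp_perm σ fun i => (μ i).isSome

lemma matchedCount_lt_update [DecidableEq I] (hi : μ i = none) :
    matchedCount μ < matchedCount (update μ i (some c)) := by
  refine card_lt_card ((ssubset_iff_of_subset fun k hk => ?_).2 ⟨i, by simp, by simp [hi]⟩)
  simp only [mem_filter, mem_univ, true_and] at hk ⊢
  rwa [update_of_ne (by rintro rfl; simp [hi] at hk)]

lemma exists_unmatched_of_matchedCount_lt (hlt : matchedCount μ < matchedCount ν) :
    ∃ i c, ν i = some c ∧ μ i = none := by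
  by_contra! h
  refine hlt.not_ge (card_le_card fun k hk => ?_)
  simp only [mem_filter, mem_univ, true_and, Option.isSome_iff_exists] at hk ⊢
  obtain ⟨c, hc⟩ := hk
  exact Option.ne_none_iff_exists'.mp (h k c hc)

variable [DecidableEq C]

lemma IsMatching.benefCount_le (hμ : IsMatching q μ) :
    benefCount Cstar μ ≤ ∑ c ∈ Cstar, q c :=
  sum_le_sum fun c _ => hμ c

lemma IsMatching.comp_perm (hμ : IsMatching q μ) (σ : Equiv.Perm I) : IsMatching q (μ ∘ σ) :=
  fun c => (card_filter_comp_perm σ fun i => μ i = some c).trans_le (hμ c)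

lemma benefCount_comp_perm (μ : I → Option C) (σ : Equiv.Perm I) :
    benefCount Cstar (μ ∘ σ) = benefCount Cstar μ :=
  sum_congr rfl fun c _ => card_filter_comp_perm σ fun i => μ i = some c

lemma filter_update_eq_some [DecidableEq I] (hi : μ i = none) (d : C) :
    univ.filter (fun k => update μ i (some c) k = some d) =
      if c = d then insert i (univ.filter fun k => μ k = some d)
      else univ.filter fun k => μ k = some d := by
  ext k
  rcases eq_or_ne k i with rfl | hki <;> split_ifs <;> simp_all

lemma IsMatching.update [DecidableEq I] (hμ : IsMatching q μ) (hi : μ i = none)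
    (hfree : #(univ.filter fun k => μ k = some c) < q c) :
    IsMatching q (update μ i (some c)) := by
  intro d
  rw [filter_update_eq_some hi]
  split_ifs with hcd
  · exact (card_insert_le _ _).trans (hcd ▸ hfree)
  · exact hμ d

lemma benefCount_le_update [DecidableEq I] (hi : μ i = none) :
    benefCount Cstar μ ≤ benefCount Cstar (update μ i (some c)) := by
  refine sum_le_sum fun d _ => card_le_card ?_
  rw [filter_update_eq_some hi]
  split_ifs
  exacts [subset_insert _ _, subset_rfl]

lemma exists_displaced_of_full (hν : IsMatching q ν) (hνi : ν i = some c) (hμi : μ i = none)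
    (hfull : ¬ #(univ.filter fun k => μ k = some c) < q c) :
    ∃ j, μ j = some c ∧ ν j ≠ some c := by
  by_contra! h
  refine hfull ((card_lt_card ((ssubset_iff_of_subset fun k hk => ?_).2 ⟨i, ?_, ?_⟩)).trans_le
    (hν c)) <;> simp_all

lemma exists_augment_of_matchedCount_lt (Cstar : Finset C) (hν : IsMatching q ν)
    (hνc : Compliant prio ν) (hμ : IsMatching q μ) (hμc : Compliant prio μ)
    (hlt : matchedCount μ < matchedCount ν) :
    ∃ μ', IsMatching q μ' ∧ Compliant prio μ' ∧ matchedCount μ < matchedCount μ' ∧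
      benefCount Cstar μ ≤ benefCount Cstar μ' := by
  classical
  induction hd : #(univ.filter fun k => μ k ≠ ν k) using Nat.strong_induction_on
    generalizing μ with
  | _ n ih =>
  obtain ⟨i, c, hνi, hμi⟩ := exists_unmatched_of_matchedCount_lt hlt
  have hel : Eligible prio i c := hνc i c hνi
  by_cases hfree : #(univ.filter fun k => μ k = some c) < q c
  · exact ⟨update μ i (some c), hμ.update hμi hfree, hμc.update hel,
      matchedCount_lt_update hμi, benefCount_le_update hμi⟩
  obtain ⟨j, hμj, hνj⟩ := exists_displaced_of_full hν hνi hμi hfree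
  -- `μ ∘ swap i j` hands `j`'s seat to `i`; being a relabelling of agents, it keeps all counts.
  have hcloser := card_filter_comp_swap_ne_lt (g := ν) (hμj.trans hνi.symm)
    (by simp [hμi, hνi]) (by rwa [hμj, ne_comm])
  obtain ⟨μ', hμ'm, hμ'c, hgt, hben⟩ := ih _ (hd ▸ hcloser) (hμ.comp_perm _)
    (hμc.comp_swap hμi hμj hel) (by rwa [matchedCount_comp_perm]) rfl
  exact ⟨μ', hμ'm, hμ'c, by rwa [matchedCount_comp_perm] at hgt,
    by rwa [benefCount_comp_perm] at hben⟩

end ReserveSystem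

theorem exists_maxCard_maxBenef_general
    [Fintype I] [DecidableEq C]
    (q : C → ℕ) (prio : C → Option I → Option I → Prop)
    (Cstar : Finset C) :
    ∃ μ : I → Option C,
      IsMatching q μ ∧ Compliant prio μ ∧ MaxCard q prio μ ∧
        MaxBenef q prio Cstar μ := by
  set S := {μ : I → Option C | IsMatching q μ ∧ Compliant prio μ}
  have hS : S.Nonempty := ⟨fun _ => none, fun c => by simp, fun i c h => by simp at h⟩
  obtain ⟨μ₀, hμ₀, hmax₀⟩ := exists_forall_le_of_bddAbove_image hS
    ⟨∑ c ∈ Cstar, q c, by rintro _ ⟨μ, ⟨hμ, -⟩, rfl⟩; exact hμ.benefCount_le⟩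
  obtain ⟨μ, ⟨⟨hμm, hμc⟩, hμb⟩, hmax⟩ := exists_forall_le_of_bddAbove_image (f := matchedCount)
    (s := {μ ∈ S | MaxBenef q prio Cstar μ}) ⟨μ₀, hμ₀, fun ρ hρm hρc => hmax₀ ρ ⟨hρm, hρc⟩⟩
    ⟨Fintype.card I, by rintro _ ⟨μ, -, rfl⟩; exact card_filter_le _ _⟩
  refine ⟨μ, hμm, hμc, fun ν hνm hνc => ?_, hμb⟩
  by_contra! hlt
  obtain ⟨μ', hμ'm, hμ'c, hgt, hben⟩ :=
    exists_augment_of_matchedCount_lt Cstar hνm hνc hμm hμc hlt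
  exact (hmax μ' ⟨⟨hμ'm, hμ'c⟩, fun ρ hρm hρc => (hμb ρ hρm hρc).trans hben⟩).not_gt hgt

/-- Every sequential reserve system admits an
eligibility-compliant matching that simultaneously has maximum cardinality
and is a maximum beneficiary assignment. -/
theorem exists_maxCard_maxBenef
    [Fintype I] [Fintype C] [DecidableEq C]
    (q : C → ℕ) (prio : C → Option I → Option I → Prop)
    (hstrict : ∀ c : C, IsStrictTotalOrder (Option I) (prio c))
    (Cstar : Finset C) (prec : C → C → Prop)
    (hTrans : ∀ a b c : C, prec a b → prec b c → prec a c)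
    (hTotal : ∀ a b : C, prec a b ∨ prec b a) :
    ∃ μ : I → Option C,
      IsMatching q μ ∧ Compliant prio μ ∧ MaxCard q prio μ ∧
        MaxBenef q prio Cstar μ :=
  exists_maxCard_maxBenef_general q prio Cstar
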